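/- Let φ, ψ be formulas with φ ∧ ψ ⊨ ⊥, let σ ⊆ sig(φ), and let φ', ψ' be conservative extensions of φ and ψ respectively such that sig(φ') ∩ sig(ψ') ⊆ sig(φ) ∩ sig(ψ). Then every Craig separator for φ', ψ' is also a Craig separator for φ, ψ. -/

import Mathlib

inductive PropForm : Type where
  | var : ℕ → PropForm
  | tru : PropForm
  | fls : PropForm
  | neg : PropForm → PropForm
  | conj : PropForm → PropForm → PropForm
  | disj : PropForm → PropForm → PropForm
deriving DecidableEq

namespace PropForm

def eval (v : ℕ → Bool) : PropForm → Bool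
  | var p => v p
  | tru => true
  | fls => false
  | neg φ => !(eval v φ)
  | conj φ ψ => eval v φ && eval v ψ
  | disj φ ψ => eval v φ || eval v ψ

def sig : PropForm → Finset ℕ
  | var p => {p}
  | tru => ∅
  | fls => ∅
  | neg φ => sig φ
  | conj φ ψ => sig φ ∪ sig ψ
  | disj φ ψ => sig φ ∪ sig ψ

def impl (φ ψ : PropForm) : PropForm := disj (neg φ) ψ

def iff (φ ψ : PropForm) : PropForm := conj (impl φ ψ) (impl ψ φ)

end PropForm

/-- Semantic entailment: every model of `φ` is a model of `ψ`. -/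
def Entails (φ ψ : PropForm) : Prop :=
  ∀ v : ℕ → Bool, φ.eval v = true → ψ.eval v = true

/-- `ψ'` is a conservative extension of `ψ`. -/
def ConservativeExt (ψ' ψ : PropForm) : Prop :=
  Entails ψ' ψ ∧ ψ.sig ⊆ ψ'.sig ∧
    ∀ χ : PropForm, χ.sig ⊆ ψ.sig → Entails ψ' χ → Entails ψ χ

def IsSeparator (φ ψ χ : PropForm) : Prop :=
  Entails φ χ ∧ Entails (χ.conj ψ) PropForm.fls ∧ χ.sig ⊆ φ.sig ∩ ψ.sig

lemma entails_conj_fls_iff {χ ψ : PropForm} :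
    Entails (χ.conj ψ) PropForm.fls ↔ Entails ψ χ.neg := by
  refine forall_congr' fun v => ?_
  simp only [PropForm.eval]
  cases χ.eval v <;> cases ψ.eval v <;> decide

lemma ConservativeExt.entails_of_entails {ψ' ψ χ : PropForm} (h : ConservativeExt ψ' ψ)
    (hχ : χ.sig ⊆ ψ.sig) (h' : Entails ψ' χ) : Entails ψ χ :=
  h.2.2 χ hχ h'

theorem separator_of_conservative_extensions_general (φ ψ φ' ψ' : PropForm)
    (hφ : ConservativeExt φ' φ) (hψ : ConservativeExt ψ' ψ)
    (hsig : φ'.sig ∩ ψ'.sig ⊆ φ.sig ∩ ψ.sig)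
    (χ : PropForm) (h : IsSeparator φ' ψ' χ) :
    IsSeparator φ ψ χ := by
  obtain ⟨hφ'χ, hχψ', hχsig'⟩ := h
  have hχsig : χ.sig ⊆ φ.sig ∩ ψ.sig := hχsig'.trans hsig
  refine ⟨hφ.entails_of_entails (hχsig.trans Finset.inter_subset_left) hφ'χ, ?_, hχsig⟩
  rw [entails_conj_fls_iff] at hχψ' ⊢
  -- `χ.neg` has the signature of `χ`, so conservativity of `ψ'` over `ψ` applies to it
  exact hψ.entails_of_entails (hχsig.trans Finset.inter_subset_right) hχψ'

/-- Craig separators for conservative extensions sharing no new atoms are Craig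
separators for the original formulas. -/
theorem separator_of_conservative_extensions (φ ψ φ' ψ' : PropForm) (σ : Finset ℕ)
    (hσ : σ ⊆ φ.sig)
    (hunsat : Entails (φ.conj ψ) PropForm.fls)
    (hφ : ConservativeExt φ' φ) (hψ : ConservativeExt ψ' ψ)
    (hsig : φ'.sig ∩ ψ'.sig ⊆ φ.sig ∩ ψ.sig)
    (χ : PropForm) (h : IsSeparator φ' ψ' χ) :
    IsSeparator φ ψ χ :=
  separator_of_conservative_extensions_general φ ψ φ' ψ' hφ hψ hsig χ h
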